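/- arXiv:math/0404167 — 2 statements merged into one kernel-verified Lean document; each statement's English description precedes it below -/
import Mathlib

section
/- Let T be a bounded operator on a Hilbert space H with closed invariant subspace N, and write T in block form [[A, B], [0, D]] with respect to H = N ⊕ N⊥. If [T*, T] is compact and [A*, A] is compact, then BB* is compact, B*B is compact, and [D*, D] is compact. -/
/-! Write `Q = 1 - P`. Since `Q T P = 0`, inserting `1 = P + Q` into `T* T` and `T T*` gives
`P [T*, T] P = [A*, A] - B B*` and `Q [T*, T] Q = B* B + [D*, D]`. The first identity makes `B B*`
compact. Then `‖B* x‖² = ⟪B B* x, x⟫ ≤ ‖B B* x‖ ‖x‖` makes `B*` compact (an `ε²`-net of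
`B B*`-images of the unit ball yields an `ε`-net of `B*`-images), hence `B* B` is compact, and the
second identity gives `[D*, D]`. -/

open ContinuousLinearMap Metric

section StarRing

variable {R : Type*} [Ring R]

lemma IsIdempotentElem.mul_mul_eq_add {p : R} (hp : IsIdempotentElem p) (r x y s : R) :
    r * x * y * s = r * x * p * (p * y * s) + r * x * (1 - p) * ((1 - p) * y * s) := by
  calc r * x * y * s = r * x * (p + (1 - p)) * y * s := by rw [add_sub_cancel, mul_one]
    _ = r * x * (p * p) * y * s + r * x * ((1 - p) * (1 - p)) * y * s := by
        rw [hp.eq, hp.one_sub.eq]; noncomm_ring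
    _ = _ := by simp only [mul_assoc]

variable [StarRing R]

def selfCommutator (a : R) : R := star a * a - a * star a

lemma mul_selfCommutator_mul (r t s : R) :
    r * selfCommutator t * s = r * star t * t * s - r * t * star t * s := by
  rw [selfCommutator]; noncomm_ring

lemma IsSelfAdjoint.star_mul_mul {a b : R} (ha : IsSelfAdjoint a) (hb : IsSelfAdjoint b) (t : R) :
    star (a * t * b) = b * star t * a := by
  rw [star_mul, star_mul, ha.star_eq, hb.star_eq, mul_assoc]

namespace IsStarProjection

variable {p t : R} (hp : IsStarProjection p) (ht : (1 - p) * t * p = 0)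
include hp ht

lemma mul_selfCommutator_mul_self :
    p * selfCommutator t * p =
      selfCommutator (p * t * p) - p * t * (1 - p) * star (p * t * (1 - p)) := by
  have h₁ := hp.isIdempotentElem.mul_mul_eq_add p (star t) t p
  have h₂ := hp.isIdempotentElem.mul_mul_eq_add p t (star t) p
  rw [ht, mul_zero, add_zero] at h₁
  rw [mul_selfCommutator_mul, h₁, h₂, selfCommutator,
    hp.isSelfAdjoint.star_mul_mul hp.isSelfAdjoint,
    hp.isSelfAdjoint.star_mul_mul hp.one_sub.isSelfAdjoint]
  noncomm_ring

lemma one_sub_mul_selfCommutator_mul_one_sub :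
    (1 - p) * selfCommutator t * (1 - p) =
      star (p * t * (1 - p)) * (p * t * (1 - p)) + selfCommutator ((1 - p) * t * (1 - p)) := by
  have h₁ := hp.isIdempotentElem.mul_mul_eq_add (1 - p) (star t) t (1 - p)
  have h₂ := hp.isIdempotentElem.mul_mul_eq_add (1 - p) t (star t) (1 - p)
  rw [ht, zero_mul, zero_add] at h₂
  rw [mul_selfCommutator_mul, h₁, h₂, selfCommutator,
    hp.isSelfAdjoint.star_mul_mul hp.one_sub.isSelfAdjoint,
    hp.one_sub.isSelfAdjoint.star_mul_mul hp.one_sub.isSelfAdjoint]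
  noncomm_ring

end IsStarProjection

end StarRing

theorem IsCompactOperator.of_norm_sq_le {𝕜 E F G : Type*} [NontriviallyNormedField 𝕜]
    [SeminormedAddCommGroup E] [NormedSpace 𝕜 E] [SeminormedAddCommGroup F] [NormedSpace 𝕜 F]
    [NormedAddCommGroup G] [NormedSpace 𝕜 G] [CompleteSpace G]
    {f : E →L[𝕜] F} {g : E →L[𝕜] G} (hf : IsCompactOperator f)
    (hfg : ∀ x, ‖g x‖ ^ 2 ≤ ‖f x‖ * ‖x‖) : IsCompactOperator g := by
  have hfB : TotallyBounded (f '' closedBall 0 1) := by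
    obtain ⟨K, hK, hfK⟩ := hf.image_closedBall_subset_compact (f := (f : E →ₗ[𝕜] F)) 1
    exact hK.totallyBounded.subset hfK
  refine (isCompactOperator_iff_isCompact_closure_image_closedBall (g : E →ₗ[𝕜] G) one_pos).mpr
    (TotallyBounded.isCompact_of_isClosed (TotallyBounded.closure ?_) isClosed_closure)
  rw [Metric.totallyBounded_iff]
  intro ε hε
  obtain ⟨u, huB, hu, hcover⟩ := Set.exists_subset_image_finite_and.mp
    (finite_approx_of_totallyBounded hfB (ε ^ 2 / 2) (by positivity))
  refine ⟨g '' u, hu.image g, ?_⟩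
  rintro _ ⟨x, hx, rfl⟩
  obtain ⟨y, hyu, hxy⟩ : ∃ y ∈ u, ‖f (x - y)‖ < ε ^ 2 / 2 := by
    simpa [dist_eq_norm] using hcover ⟨x, hx, rfl⟩
  have hdiam : ‖x - y‖ ≤ 2 := by
    have := mem_closedBall_zero_iff.mp hx
    have := mem_closedBall_zero_iff.mp (huB hyu)
    linarith [norm_sub_le x y]
  refine Set.mem_biUnion (Set.mem_image_of_mem g hyu) ?_
  rw [mem_ball, dist_eq_norm, coe_coe, ← map_sub]
  refine lt_of_pow_lt_pow_left₀ 2 hε.le ?_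
  calc ‖g (x - y)‖ ^ 2 ≤ ‖f (x - y)‖ * ‖x - y‖ := hfg _
    _ ≤ ‖f (x - y)‖ * 2 := by gcongr
    _ < ε ^ 2 := by linarith

theorem IsCompactOperator.of_adjoint_comp_self {𝕜 E F : Type*} [RCLike 𝕜]
    [NormedAddCommGroup E] [InnerProductSpace 𝕜 E] [CompleteSpace E]
    [NormedAddCommGroup F] [InnerProductSpace 𝕜 F] [CompleteSpace F] {S : E →L[𝕜] F}
    (h : IsCompactOperator (adjoint S ∘L S)) : IsCompactOperator S :=
  h.of_norm_sq_le fun x => by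
    rw [apply_norm_sq_eq_inner_adjoint_left]; exact re_inner_le_norm _ _

/-- if `[T*,T]` and `[A*,A]` are compact, then `BB*`, `B*B` and
`[D*,D]` are compact, where `[[A,B],[0,D]]` is the block form of `T` relative
to `H = N ⊕ Nᗮ` (blocks realized as compressions via the projection `P` onto `N`). -/
theorem compact_blocks_of_compact_selfCommutator
    {H : Type*} [NormedAddCommGroup H] [InnerProductSpace ℂ H] [CompleteSpace H]
    (N : Submodule ℂ H) [CompleteSpace N]
    (P : H →L[ℂ] H) (hP : P = N.subtypeL ∘L N.orthogonalProjection)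
    (T A B D : H →L[ℂ] H)
    (hA : A = P ∘L T ∘L P)
    (hB : B = P ∘L T ∘L (1 - P))
    (hD : D = (1 - P) ∘L T ∘L (1 - P))
    (hinv : (1 - P) ∘L T ∘L P = 0)
    (hT : IsCompactOperator ⇑(adjoint T ∘L T - T ∘L adjoint T))
    (hAc : IsCompactOperator ⇑(adjoint A ∘L A - A ∘L adjoint A)) :
    IsCompactOperator ⇑(B ∘L adjoint B) ∧
    IsCompactOperator ⇑(adjoint B ∘L B) ∧
    IsCompactOperator ⇑(adjoint D ∘L D - D ∘L adjoint D) := by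
  simp only [← mul_def, ← star_eq_adjoint, ← mul_assoc] at hA hB hD hinv hT hAc ⊢
  subst hA hB hD
  have hPproj : IsStarProjection P := hP ▸ isStarProjection_starProjection
  have hcompress (X Y : H →L[ℂ] H) : IsCompactOperator ⇑(X * selfCommutator T * Y) :=
    (hT.comp_clm Y).clm_comp X
  have hBBstar : IsCompactOperator ⇑(P * T * (1 - P) * star (P * T * (1 - P))) := by
    have h : P * T * (1 - P) * star (P * T * (1 - P)) =
        selfCommutator (P * T * P) - P * selfCommutator T * P := by
      rw [hPproj.mul_selfCommutator_mul_self hinv, sub_sub_cancel]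
    rw [h]
    exact hAc.sub (hcompress P P)
  have hBstar : IsCompactOperator ⇑(star (P * T * (1 - P))) := by
    refine .of_adjoint_comp_self ?_
    rwa [← star_eq_adjoint, star_star]
  have hBstarB : IsCompactOperator ⇑(star (P * T * (1 - P)) * (P * T * (1 - P))) :=
    hBstar.comp_clm _
  have hDcomm : selfCommutator ((1 - P) * T * (1 - P)) =
      (1 - P) * selfCommutator T * (1 - P) - star (P * T * (1 - P)) * (P * T * (1 - P)) := by
    rw [hPproj.one_sub_mul_selfCommutator_mul_one_sub hinv, add_sub_cancel_left]
  refine ⟨hBBstar, hBstarB, ?_⟩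
  rw [← selfCommutator, hDcomm]
  exact (hcompress _ _).sub hBstarB
end

section
/- Let B be a nonempty shift invariant subset of ℕ², let ᾱ_i = inf{α_i : α ∈ B} for i = 1, 2, and let B̄ = {β ∈ ℕ² : β_1 ≥ ᾱ_1 and β_2 ≥ ᾱ_2}. Then B ⊆ B̄ and B̄ \ B is finite. -/
/-- for a nonempty shift invariant subset `B ⊆ ℕ²`, with
`ᾱᵢ` the infimum of the `i`-th coordinates of `B`, the corner
`B̄ = {β : ᾱ₁ ≤ β₁, ᾱ₂ ≤ β₂}` contains `B` and `B̄ \ B` is finite. -/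
theorem corner_difference_finite
    (B : Set (ℕ × ℕ)) (hne : B.Nonempty)
    (hB : ∀ α ∈ B, (α.1 + 1, α.2) ∈ B ∧ (α.1, α.2 + 1) ∈ B)
    (a1 a2 : ℕ) (ha1 : a1 = sInf (Prod.fst '' B)) (ha2 : a2 = sInf (Prod.snd '' B)) :
    B ⊆ {β : ℕ × ℕ | a1 ≤ β.1 ∧ a2 ≤ β.2} ∧
      ({β : ℕ × ℕ | a1 ≤ β.1 ∧ a2 ≤ β.2} \ B).Finite := by
  -- upward closure
  have hup : ∀ p ∈ B, ∀ x y : ℕ, (p.1 + x, p.2 + y) ∈ B := by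
    intro p hp x y
    induction x with
    | zero =>
      induction y with
      | zero => simpa using hp
      | succ y ih => exact (hB _ ih).2
    | succ x ih => exact (hB _ ih).1
  have hup' : ∀ p ∈ B, ∀ q : ℕ × ℕ, p.1 ≤ q.1 → p.2 ≤ q.2 → q ∈ B := by
    intro p hp q h1 h2
    have := hup p hp (q.1 - p.1) (q.2 - p.2)
    rwa [Nat.add_sub_cancel' h1, Nat.add_sub_cancel' h2, Prod.mk.eta] at this
  have h1ne : (Prod.fst '' B).Nonempty := hne.image _
  have h2ne : (Prod.snd '' B).Nonempty := hne.image _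
  have hsub : B ⊆ {β : ℕ × ℕ | a1 ≤ β.1 ∧ a2 ≤ β.2} := by
    intro β hβ
    exact ⟨ha1 ▸ Nat.sInf_le ⟨β, hβ, rfl⟩, ha2 ▸ Nat.sInf_le ⟨β, hβ, rfl⟩⟩
  refine ⟨hsub, ?_⟩
  obtain ⟨p, hp, hp1⟩ : ∃ p ∈ B, p.1 = a1 := by
    have := Nat.sInf_mem h1ne
    rw [← ha1] at this; obtain ⟨p, hp, hpa⟩ := this; exact ⟨p, hp, hpa⟩
  obtain ⟨q, hq, hq2⟩ : ∃ q ∈ B, q.2 = a2 := by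
    have := Nat.sInf_mem h2ne
    rw [← ha2] at this; obtain ⟨q, hq, hqa⟩ := this; exact ⟨q, hq, hqa⟩
  have : ({β : ℕ × ℕ | a1 ≤ β.1 ∧ a2 ≤ β.2} \ B) ⊆ Set.Iio q.1 ×ˢ Set.Iio p.2 := by
    rintro β ⟨⟨hb1, hb2⟩, hbB⟩
    constructor
    · by_contra h
      exact hbB (hup' q hq β (le_of_not_gt h) (hq2 ▸ hb2))
    · by_contra h
      exact hbB (hup' p hp β (hp1 ▸ hb1) (le_of_not_gt h))
  exact Set.Finite.subset ((Set.finite_Iio _).prod (Set.finite_Iio _)) this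
end
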